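/- Let A₁,…,Aₙ : X → Yᵢ be bounded linear operators between Hilbert spaces, let i be a uniformly distributed random index in {1,…,n}, set B = (1/n)·Σᵢ Aᵢ*Aᵢ and L = maxᵢ ‖Aᵢ‖², and let A : X → Y₁×⋯×Yₙ be given by Ax = (A₁x,…,Aₙx). Let R : X → X be a deterministic bounded linear operator and x ∈ X a fixed vector. Then E[‖R(B - Aᵢ*Aᵢ)x‖²] ≤ (L/n)·‖R‖²·‖Ax‖². -/

import Mathlib

/-!
With `vᵢ = R Aᵢ*Aᵢ x` we have `R B x = (1/n) Σ vᵢ`, so `R (B - Aᵢ*Aᵢ) x` is the deviation of `vᵢ`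
from its mean; by the bias–variance decomposition its mean square is at most that of `vᵢ`, and
`‖vᵢ‖ ≤ ‖R‖ ‖Aᵢ‖ ‖Aᵢ x‖ ≤ ‖R‖ √L ‖Aᵢ x‖`.
-/

open Finset

theorem sum_norm_average_sub_sq_le {E ι : Type*} [NormedAddCommGroup E] [InnerProductSpace ℝ E]
    [Fintype ι] (v : ι → E) :
    ∑ i, ‖(Fintype.card ι : ℝ)⁻¹ • ∑ j, v j - v i‖ ^ 2 ≤ ∑ i, ‖v i‖ ^ 2 := by
  set N : ℝ := (Fintype.card ι : ℝ)
  set S := ∑ j, v j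
  have h_cross : ∑ i, inner ℝ (N⁻¹ • S) (v i) = N⁻¹ * ‖S‖ ^ 2 := by
    rw [← inner_sum, real_inner_smul_left, real_inner_self_eq_norm_sq]
  have h_mean : N * ‖N⁻¹ • S‖ ^ 2 = N⁻¹ * ‖S‖ ^ 2 := by
    rcases eq_or_ne N 0 with hN | hN
    · simp [hN]
    · rw [norm_smul, mul_pow, Real.norm_eq_abs, sq_abs]
      field_simp
  calc ∑ i, ‖N⁻¹ • S - v i‖ ^ 2
      = N * ‖N⁻¹ • S‖ ^ 2 - 2 * ∑ i, inner ℝ (N⁻¹ • S) (v i) + ∑ i, ‖v i‖ ^ 2 := by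
        simp only [norm_sub_sq_real, sum_add_distrib, sum_sub_distrib, sum_const, card_univ,
          nsmul_eq_mul, mul_sum, N]
    _ = ∑ i, ‖v i‖ ^ 2 - N⁻¹ * ‖S‖ ^ 2 := by rw [h_cross, h_mean]; ring
    _ ≤ ∑ i, ‖v i‖ ^ 2 := sub_le_self _ (by positivity)

open ContinuousLinearMap in
theorem norm_apply_adjoint_comp_apply_sq_le {𝕜 E F : Type*} [RCLike 𝕜]
    [NormedAddCommGroup E] [InnerProductSpace 𝕜 E] [CompleteSpace E]
    [NormedAddCommGroup F] [InnerProductSpace 𝕜 F] [CompleteSpace F]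
    (R : E →L[𝕜] E) (A : E →L[𝕜] F) (x : E) :
    ‖R ((adjoint A).comp A x)‖ ^ 2 ≤ ‖A‖ ^ 2 * ‖R‖ ^ 2 * ‖A x‖ ^ 2 := by
  have h : ‖R ((adjoint A).comp A x)‖ ≤ ‖A‖ * ‖R‖ * ‖A x‖ :=
    calc ‖R (adjoint A (A x))‖
        ≤ ‖R‖ * ‖adjoint A (A x)‖ := R.le_opNorm _
      _ ≤ ‖R‖ * (‖adjoint A‖ * ‖A x‖) := by gcongr; exact (adjoint A).le_opNorm _
      _ = ‖A‖ * ‖R‖ * ‖A x‖ := by rw [LinearIsometryEquiv.norm_map]; ring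
  calc _ ≤ (‖A‖ * ‖R‖ * ‖A x‖) ^ 2 := by gcongr
    _ = _ := by ring

open ContinuousLinearMap in
theorem stmt5 {E : Type*} [NormedAddCommGroup E] [InnerProductSpace ℂ E] [CompleteSpace E]
    {n : ℕ} {F : Fin n → Type*} [∀ i, NormedAddCommGroup (F i)]
    [∀ i, InnerProductSpace ℂ (F i)] [∀ i, CompleteSpace (F i)]
    (A : ∀ i, E →L[ℂ] F i)
    (B : E →L[ℂ] E) (hB : B = (n : ℝ)⁻¹ • ∑ i, (adjoint (A i)).comp (A i))
    (L : ℝ) (hL : L = ⨆ i, ‖A i‖ ^ 2)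
    (R : E →L[ℂ] E) (x : E) :
    (n : ℝ)⁻¹ * ∑ i, ‖R ((B - (adjoint (A i)).comp (A i)) x)‖ ^ 2
      ≤ L / n * ‖R‖ ^ 2 * ∑ i, ‖A i x‖ ^ 2 := by
  set v : Fin n → E := fun i => R ((adjoint (A i)).comp (A i) x)
  have h_terms : ∀ i, R ((B - (adjoint (A i)).comp (A i)) x)
      = (Fintype.card (Fin n) : ℝ)⁻¹ • ∑ j, v j - v i := by
    intro i
    simp [v, hB, map_sum, map_smul_of_tower]
  have h_bound : ∀ i, ‖v i‖ ^ 2 ≤ L * ‖R‖ ^ 2 * ‖A i x‖ ^ 2 := fun i =>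
    (norm_apply_adjoint_comp_apply_sq_le R (A i) x).trans <| by
      gcongr
      exact hL ▸ le_ciSup (f := fun j => ‖A j‖ ^ 2) (Set.finite_range _).bddAbove i
  calc (n : ℝ)⁻¹ * ∑ i, ‖R ((B - (adjoint (A i)).comp (A i)) x)‖ ^ 2
      ≤ (n : ℝ)⁻¹ * ∑ i, ‖v i‖ ^ 2 := by
        simp only [h_terms]
        let := InnerProductSpace.complexToReal (G := E)
        exact mul_le_mul_of_nonneg_left (sum_norm_average_sub_sq_le v) (by positivity)
    _ ≤ (n : ℝ)⁻¹ * ∑ i, L * ‖R‖ ^ 2 * ‖A i x‖ ^ 2 := by gcongr with i; exact h_bound i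
    _ = L / n * ‖R‖ ^ 2 * ∑ i, ‖A i x‖ ^ 2 := by rw [← mul_sum]; ring
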